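/- arXiv:2204.13087 — 2 statements merged into one kernel-verified Lean document; each statement's English description precedes it below -/
import Mathlib

section
/- Let m ≥ 2 be an integer and ε = 1/(2m). For every bounded outcome sequence v_1, v_2, … ∈ [0,1] and every forecast sequence p_1, p_2, … produced by the bounded-output POTC-Cal algorithm, and for every T ≥ 1: max( ∑_{i=1}^m | (1/T) ∑_{t=1}^T 1{p_t = M_i} (M_i − v_t) | − ε , 0 ) ≤ m/T. -/
namespace Calib

/-- Gridpoint M_i = (2i-1)/(2m). -/
noncomputable def Mg (m i : ℕ) : ℝ := (2 * (i : ℝ) - 1) / (2 * m)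

/-- Left endpoint l_i = (i-1)/m. -/
noncomputable def lept (m i : ℕ) : ℝ := ((i : ℝ) - 1) / m

/-- Right endpoint r_i = i/m. -/
noncomputable def rept (m i : ℕ) : ℝ := (i : ℝ) / m

/-- N_i^t = #{1 ≤ s ≤ t : p_s = M_i}. -/
def Ncount (a : ℕ → ℕ) (i t : ℕ) : ℕ :=
  ((Finset.Icc 1 t).filter (fun s => a s = i)).card

/-- Empirical average p_i^t of the bounded outcomes on rounds where M_i was forecast. -/
noncomputable def emp (m : ℕ) (a : ℕ → ℕ) (v : ℕ → ℝ) (i t : ℕ) : ℝ :=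
  if 0 < Ncount a i t then
    (∑ s ∈ Finset.Icc 1 t, if a s = i then v s else 0) / (Ncount a i t)
  else Mg m i

/-- Deficit d_i^t = l_i - p_i^t. -/
noncomputable def defc (m : ℕ) (a : ℕ → ℕ) (v : ℕ → ℝ) (i t : ℕ) : ℝ :=
  lept m i - emp m a v i t

/-- Excess e_i^t = p_i^t - r_i. -/
noncomputable def exc (m : ℕ) (a : ℕ → ℕ) (v : ℕ → ℝ) (i t : ℕ) : ℝ :=
  emp m a v i t - rept m i

/-- Condition A at time t: some i ∈ {1,…,m} has d_i^t ≤ 0 and e_i^t ≤ 0. -/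
def condA (m : ℕ) (a : ℕ → ℕ) (v : ℕ → ℝ) (t : ℕ) : Prop :=
  ∃ i, 1 ≤ i ∧ i ≤ m ∧ defc m a v i t ≤ 0 ∧ exc m a v i t ≤ 0

/-- The bounded-output POTC-Cal algorithm, allowing any admissible choice of
index at each step: p_1 = M_1; at time t+1, if condition A holds play a
witnessing M_i; otherwise pick i with e_i^t > 0 and d_{i+1}^t > 0 and play
M_i if v_{t+1} ≤ r_i and M_{i+1} if v_{t+1} > r_i. -/
def POTCB (m : ℕ) (a : ℕ → ℕ) (v : ℕ → ℝ) : Prop :=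
  a 1 = 1 ∧
  ∀ t, 1 ≤ t →
    (∃ i, 1 ≤ i ∧ i ≤ m ∧ defc m a v i t ≤ 0 ∧ exc m a v i t ≤ 0 ∧ a (t + 1) = i) ∨
    (¬ condA m a v t ∧
      ∃ i, 1 ≤ i ∧ i ≤ m - 1 ∧ 0 < exc m a v i t ∧ 0 < defc m a v (i + 1) t ∧
        (v (t + 1) ≤ rept m i → a (t + 1) = i) ∧
        (rept m i < v (t + 1) → a (t + 1) = i + 1))

end Calib

/-! ### Auxiliary machinery for the proof -/

/-- The sum of outcomes on rounds where bin `i` was forecast. -/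
noncomputable def SmA (a : ℕ → ℕ) (v : ℕ → ℝ) (i t : ℕ) : ℝ :=
  ∑ s ∈ Finset.Icc 1 t, if a s = i then v s else 0

/-- Accumulated deficit `N_i · l_i − S_i`. -/
noncomputable def Aq (m : ℕ) (a : ℕ → ℕ) (v : ℕ → ℝ) (i t : ℕ) : ℝ :=
  (Calib.Ncount a i t : ℝ) * Calib.lept m i - SmA a v i t

/-- Accumulated excess `S_i − N_i · r_i`. -/
noncomputable def Bq (m : ℕ) (a : ℕ → ℕ) (v : ℕ → ℝ) (i t : ℕ) : ℝ :=
  SmA a v i t - (Calib.Ncount a i t : ℝ) * Calib.rept m i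

lemma Icc10 : Finset.Icc 1 0 = (∅ : Finset ℕ) := by
  apply Finset.Icc_eq_empty; omega

lemma Ncount_succ (a : ℕ → ℕ) (i t : ℕ) :
    Calib.Ncount a i (t + 1) = Calib.Ncount a i t + (if a (t + 1) = i then 1 else 0) := by
  unfold Calib.Ncount
  rw [Finset.card_filter, Finset.card_filter,
    Finset.sum_Icc_succ_top (Nat.le_add_left 1 t)]

lemma SmA_succ (a : ℕ → ℕ) (v : ℕ → ℝ) (i t : ℕ) :
    SmA a v i (t + 1) = SmA a v i t + (if a (t + 1) = i then v (t + 1) else 0) := by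
  unfold SmA
  rw [Finset.sum_Icc_succ_top (Nat.le_add_left 1 t)]

lemma SmA_of_Ncount_zero {a : ℕ → ℕ} (v : ℕ → ℝ) {i t : ℕ}
    (h : Calib.Ncount a i t = 0) : SmA a v i t = 0 := by
  unfold Calib.Ncount at h
  rw [Finset.card_eq_zero] at h
  refine Finset.sum_eq_zero fun s hs => ?_
  rw [if_neg]
  intro hai
  have hmem : s ∈ (Finset.Icc 1 t).filter (fun s => a s = i) :=
    Finset.mem_filter.2 ⟨hs, hai⟩
  rw [h] at hmem
  exact absurd hmem (Finset.notMem_empty s)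

lemma Aq_nonpos {m : ℕ} {a : ℕ → ℕ} {v : ℕ → ℝ} {i t : ℕ}
    (h : Calib.defc m a v i t ≤ 0) : Aq m a v i t ≤ 0 := by
  by_cases hN : 0 < Calib.Ncount a i t
  · unfold Calib.defc Calib.emp at h
    rw [if_pos hN] at h
    have hN' : (0 : ℝ) < (Calib.Ncount a i t : ℝ) := by exact_mod_cast hN
    unfold Aq SmA
    rw [sub_nonpos] at h ⊢
    have := (le_div_iff₀ hN').1 h
    linarith [this]
  · have h0 : Calib.Ncount a i t = 0 := by omega
    simp [Aq, SmA_of_Ncount_zero v h0, h0]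

lemma Bq_nonpos {m : ℕ} {a : ℕ → ℕ} {v : ℕ → ℝ} {i t : ℕ}
    (h : Calib.exc m a v i t ≤ 0) : Bq m a v i t ≤ 0 := by
  by_cases hN : 0 < Calib.Ncount a i t
  · unfold Calib.exc Calib.emp at h
    rw [if_pos hN] at h
    have hN' : (0 : ℝ) < (Calib.Ncount a i t : ℝ) := by exact_mod_cast hN
    unfold Bq SmA
    rw [sub_nonpos] at h ⊢
    have := (div_le_iff₀ hN').1 h
    linarith [this]
  · have h0 : Calib.Ncount a i t = 0 := by omega
    simp [Bq, SmA_of_Ncount_zero v h0, h0]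

lemma defc_add_exc {m : ℕ} (hm : 0 < m) (a : ℕ → ℕ) (v : ℕ → ℝ) (i t : ℕ) :
    Calib.defc m a v i t + Calib.exc m a v i t = -(1 / m) := by
  have hm' : (m : ℝ) ≠ 0 := by positivity
  unfold Calib.defc Calib.exc Calib.lept Calib.rept
  field_simp
  ring

lemma Aq_nonpos_of_exc_pos {m : ℕ} (hm : 0 < m) {a : ℕ → ℕ} {v : ℕ → ℝ} {i t : ℕ}
    (h : 0 < Calib.exc m a v i t) : Aq m a v i t ≤ 0 := by
  apply Aq_nonpos
  have h1 := defc_add_exc hm a v i t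
  have h2 : (0 : ℝ) ≤ 1 / m := by positivity
  linarith

lemma Bq_nonpos_of_defc_pos {m : ℕ} (hm : 0 < m) {a : ℕ → ℕ} {v : ℕ → ℝ} {i t : ℕ}
    (h : 0 < Calib.defc m a v i t) : Bq m a v i t ≤ 0 := by
  apply Bq_nonpos
  have h1 := defc_add_exc hm a v i t
  have h2 : (0 : ℝ) ≤ 1 / m := by positivity
  linarith

lemma lept_le_one {m i : ℕ} (hm : 0 < m) (hi : i ≤ m) : Calib.lept m i ≤ 1 := by
  unfold Calib.lept
  rw [div_le_one (by exact_mod_cast hm)]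
  have : (i : ℝ) ≤ m := by exact_mod_cast hi
  linarith

lemma rept_nonneg (m i : ℕ) : 0 ≤ Calib.rept m i := by
  unfold Calib.rept; positivity

/-- The key invariant: the accumulated deficit and excess never exceed 1. -/
lemma potc_invariant (m : ℕ) (hm : 2 ≤ m)
    (v : ℕ → ℝ) (hv : ∀ t, v t ∈ Set.Icc (0 : ℝ) 1)
    (a : ℕ → ℕ) (ha : ∀ t, 1 ≤ t → 1 ≤ a t ∧ a t ≤ m)
    (halg : Calib.POTCB m a v) :
    ∀ t i, Aq m a v i t ≤ 1 ∧ Bq m a v i t ≤ 1 := by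
  have hm0 : 0 < m := by omega
  intro t
  induction t with
  | zero =>
    intro i
    constructor <;> simp [Aq, Bq, Calib.Ncount, SmA, Icc10]
  | succ t IH =>
    intro i
    have hA : Aq m a v i (t + 1) =
        Aq m a v i t + (if a (t + 1) = i then Calib.lept m i - v (t + 1) else 0) := by
      unfold Aq
      rw [SmA_succ, Ncount_succ]
      push_cast
      split <;> ring
    have hB : Bq m a v i (t + 1) =
        Bq m a v i t + (if a (t + 1) = i then v (t + 1) - Calib.rept m i else 0) := by
      unfold Bq
      rw [SmA_succ, Ncount_succ]
      push_cast
      split <;> ring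
    by_cases hij : a (t + 1) = i
    · rw [hA, hB, if_pos hij, if_pos hij]
      obtain ⟨hv0, hv1⟩ := hv (t + 1)
      have him : i ≤ m := hij ▸ (ha (t + 1) (by omega)).2
      have hlept : Calib.lept m i ≤ 1 := lept_le_one hm0 him
      have hrept : 0 ≤ Calib.rept m i := rept_nonneg m i
      rcases Nat.eq_zero_or_pos t with rfl | ht
      · have hN0 : Calib.Ncount a i 0 = 0 := by simp [Calib.Ncount, Icc10]
        have hA0 : Aq m a v i 0 = 0 := by
          simp [Aq, SmA_of_Ncount_zero v hN0, hN0]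
        have hB0 : Bq m a v i 0 = 0 := by
          simp [Bq, SmA_of_Ncount_zero v hN0, hN0]
        constructor
        · rw [hA0]; linarith
        · rw [hB0]; linarith
      · rcases halg.2 t ht with ⟨i0, _, _, hd, he, hji0⟩ |
          ⟨_, i0, _, _, hepos, hdpos, hle, hgt⟩
        · have hii : i0 = i := by rw [← hji0, hij]
          subst hii
          have h1 : Aq m a v i0 t ≤ 0 := Aq_nonpos hd
          have h2 : Bq m a v i0 t ≤ 0 := Bq_nonpos he
          constructor <;> linarith
        · by_cases hcase : v (t + 1) ≤ Calib.rept m i0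
          · have hii : i0 = i := by rw [← hle hcase, hij]
            subst hii
            have h1 : Aq m a v i0 t ≤ 0 := Aq_nonpos_of_exc_pos hm0 hepos
            have h2 : Bq m a v i0 t ≤ 1 := (IH i0).2
            constructor <;> linarith
          · push_neg at hcase
            have hii : i0 + 1 = i := by rw [← hgt hcase, hij]
            subst hii
            have hlr : Calib.lept m (i0 + 1) = Calib.rept m i0 := by
              unfold Calib.lept Calib.rept
              push_cast
              ring_nf
            have h1 : Aq m a v (i0 + 1) t ≤ 1 := (IH (i0 + 1)).1
            have h2 : Bq m a v (i0 + 1) t ≤ 0 := Bq_nonpos_of_defc_pos hm0 hdpos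
            constructor
            · rw [hlr]; linarith
            · linarith
    · rw [hA, hB, if_neg hij, if_neg hij]
      have := IH i
      constructor <;> linarith [this.1, this.2]

lemma sum_Ncount (m T : ℕ) (a : ℕ → ℕ) (ha : ∀ t, 1 ≤ t → 1 ≤ a t ∧ a t ≤ m) :
    ∑ i ∈ Finset.Icc 1 m, Calib.Ncount a i T = T := by
  simp only [Calib.Ncount, Finset.card_filter]
  rw [Finset.sum_comm]
  have hone : ∀ t ∈ Finset.Icc 1 T,
      (∑ i ∈ Finset.Icc 1 m, if a t = i then 1 else 0) = 1 := by
    intro t ht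
    rw [Finset.sum_ite_eq (Finset.Icc 1 m) (a t) (fun _ => 1)]
    rw [if_pos]
    have ht1 : 1 ≤ t := (Finset.mem_Icc.1 ht).1
    exact Finset.mem_Icc.2 ⟨(ha t ht1).1, (ha t ht1).2⟩
  rw [Finset.sum_congr rfl hone]
  simp [Nat.card_Icc]

/-- Appendix B, bounded outputs: the bounded-output POTC-Cal
algorithm satisfies ε-CE_T ≤ m/T for all T ≥ 1, against every outcome sequence
in [0,1]. -/
theorem potc_cal_bounded_fast_rate (m : ℕ) (hm : 2 ≤ m)
    (v : ℕ → ℝ) (hv : ∀ t, v t ∈ Set.Icc (0 : ℝ) 1)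
    (a : ℕ → ℕ) (ha : ∀ t, 1 ≤ t → 1 ≤ a t ∧ a t ≤ m)
    (halg : Calib.POTCB m a v) (T : ℕ) (hT : 1 ≤ T) :
    max ((∑ i ∈ Finset.Icc 1 m,
          |(1 / (T : ℝ)) * ∑ t ∈ Finset.Icc 1 T,
              (if a t = i then Calib.Mg m i - v t else 0)|) - 1 / (2 * m)) 0
      ≤ (m : ℝ) / T := by
  have hm0 : (0 : ℝ) < m := by
    have : 0 < m := by omega
    exact_mod_cast this
  have hT0 : (0 : ℝ) < T := by
    have : 0 < T := by omega
    exact_mod_cast this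
  have hinv := potc_invariant m hm v hv a ha halg T
  -- Per-bin bound
  have key : ∀ i ∈ Finset.Icc 1 m,
      |∑ t ∈ Finset.Icc 1 T, (if a t = i then Calib.Mg m i - v t else 0)|
        ≤ (Calib.Ncount a i T : ℝ) * (1 / (2 * m)) + 1 := by
    intro i _
    have hS : (∑ t ∈ Finset.Icc 1 T, (if a t = i then Calib.Mg m i - v t else 0))
        = (Calib.Ncount a i T : ℝ) * Calib.Mg m i - SmA a v i T := by
      have hsplit : ∀ t, (if a t = i then Calib.Mg m i - v t else 0)
          = (if a t = i then (1 : ℝ) else 0) * Calib.Mg m i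
            - (if a t = i then v t else 0) := by
        intro t; split <;> ring
      simp only [hsplit]
      rw [Finset.sum_sub_distrib, ← Finset.sum_mul, Finset.sum_boole]
      rfl
    have hMg1 : Calib.Mg m i = Calib.lept m i + 1 / (2 * m) := by
      unfold Calib.Mg Calib.lept
      field_simp
      ring
    have hMg2 : Calib.Mg m i = Calib.rept m i - 1 / (2 * m) := by
      unfold Calib.Mg Calib.rept
      field_simp
    have hAle := (hinv i).1
    have hBle := (hinv i).2
    unfold Aq at hAle
    unfold Bq at hBle
    rw [abs_le]
    constructor
    · rw [hS, hMg2]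
      nlinarith [Nat.cast_nonneg (α := ℝ) (Calib.Ncount a i T)]
    · rw [hS, hMg1]
      nlinarith [Nat.cast_nonneg (α := ℝ) (Calib.Ncount a i T)]
  -- sum the per-bin bounds
  have hNsum : (∑ i ∈ Finset.Icc 1 m, (Calib.Ncount a i T : ℝ)) = T := by
    rw [← Nat.cast_sum]
    exact_mod_cast sum_Ncount m T a ha
  have habs : ∀ i ∈ Finset.Icc 1 m,
      |(1 / (T : ℝ)) * ∑ t ∈ Finset.Icc 1 T,
        (if a t = i then Calib.Mg m i - v t else 0)|
      = (1 / (T : ℝ)) * |∑ t ∈ Finset.Icc 1 T,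
        (if a t = i then Calib.Mg m i - v t else 0)| := by
    intro i _
    rw [abs_mul, abs_of_pos (by positivity : (0 : ℝ) < 1 / T)]
  have hsum : (∑ i ∈ Finset.Icc 1 m,
      |(1 / (T : ℝ)) * ∑ t ∈ Finset.Icc 1 T,
        (if a t = i then Calib.Mg m i - v t else 0)|)
      ≤ 1 / (2 * m) + m / T := by
    rw [Finset.sum_congr rfl habs, ← Finset.mul_sum]
    have h2 : (∑ i ∈ Finset.Icc 1 m,
        |∑ t ∈ Finset.Icc 1 T, (if a t = i then Calib.Mg m i - v t else 0)|)
        ≤ (T : ℝ) * (1 / (2 * m)) + m := by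
      calc (∑ i ∈ Finset.Icc 1 m,
            |∑ t ∈ Finset.Icc 1 T, (if a t = i then Calib.Mg m i - v t else 0)|)
          ≤ ∑ i ∈ Finset.Icc 1 m,
              ((Calib.Ncount a i T : ℝ) * (1 / (2 * m)) + 1) :=
            Finset.sum_le_sum key
        _ = (T : ℝ) * (1 / (2 * m)) + m := by
            rw [Finset.sum_add_distrib, ← Finset.sum_mul, hNsum]
            simp [Nat.card_Icc]
    have h3 : (1 / (T : ℝ)) * ((T : ℝ) * (1 / (2 * m)) + m) = 1 / (2 * m) + m / T := by
      rw [mul_add, one_div, inv_mul_cancel_left₀ (ne_of_gt hT0)]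
      ring
    calc (1 / (T : ℝ)) * (∑ i ∈ Finset.Icc 1 m,
          |∑ t ∈ Finset.Icc 1 T, (if a t = i then Calib.Mg m i - v t else 0)|)
        ≤ (1 / (T : ℝ)) * ((T : ℝ) * (1 / (2 * m)) + m) := by
          apply mul_le_mul_of_nonneg_left h2 (by positivity)
      _ = 1 / (2 * m) + m / T := h3
  apply max_le
  · linarith
  · positivity
end

section
/- Let m ≥ 2 be an integer. Let v_1, v_2, … ∈ [0,1] be any bounded outcome sequence and p_1, p_2, … ∈ {M_1,…,M_m} any forecast sequence. Fix t ≥ 1 and suppose there exists j ∈ {1,…,m−1} with e_j^t > 0 and d_{j+1}^t > 0 such that p_{t+1} = M_j if v_{t+1} ≤ r_j and p_{t+1} = M_{j+1} if v_{t+1} > r_j. Let i be the index of the realized forecast. Then N_i^{t+1} · max(d_i^{t+1}, e_i^{t+1}) ≤ max( N_i^t · max(d_i^t, e_i^t) , 1 ). -/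
namespace Calib

lemma Ncount_succ_eq (a : ℕ → ℕ) (i t : ℕ) (h : a (t + 1) = i) :
    Ncount a i (t + 1) = Ncount a i t + 1 := by
  unfold Ncount
  rw [← Finset.insert_Icc_right_eq_Icc_add_one (by omega : 1 ≤ t + 1), Finset.filter_insert, if_pos h,
    Finset.card_insert_of_notMem]
  intro hmem
  have := (Finset.mem_filter.mp hmem).1
  simp [Finset.mem_Icc] at this

lemma sum_succ_eq (a : ℕ → ℕ) (v : ℕ → ℝ) (i t : ℕ) (h : a (t + 1) = i) :
    (∑ s ∈ Finset.Icc 1 (t + 1), if a s = i then v s else 0)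
      = (∑ s ∈ Finset.Icc 1 t, if a s = i then v s else 0) + v (t + 1) := by
  rw [← Finset.insert_Icc_right_eq_Icc_add_one (by omega : 1 ≤ t + 1), Finset.sum_insert (by simp), if_pos h]
  ring

end Calib

/-- Appendix B, condition-B step with bounded outputs: if
e_j^t > 0, d_{j+1}^t > 0 and the forecast at time t+1 is M_j when v_{t+1} ≤ r_j
and M_{j+1} when v_{t+1} > r_j, then for the realized index i,
N_i^{t+1} · max(d_i^{t+1}, e_i^{t+1}) ≤ max(N_i^t · max(d_i^t, e_i^t), 1). -/
theorem potc_cal_bounded_condB_step (m : ℕ) (hm : 2 ≤ m)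
    (v : ℕ → ℝ) (hv : ∀ t, v t ∈ Set.Icc (0 : ℝ) 1)
    (a : ℕ → ℕ) (ha : ∀ t, 1 ≤ t → 1 ≤ a t ∧ a t ≤ m)
    (t : ℕ) (ht : 1 ≤ t) (j : ℕ) (hj1 : 1 ≤ j) (hjm : j ≤ m - 1)
    (he : 0 < Calib.exc m a v j t) (hd : 0 < Calib.defc m a v (j + 1) t)
    (hplay0 : v (t + 1) ≤ Calib.rept m j → a (t + 1) = j)
    (hplay1 : Calib.rept m j < v (t + 1) → a (t + 1) = j + 1)
    (i : ℕ)
    (hi : (v (t + 1) ≤ Calib.rept m j ∧ i = j) ∨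
          (Calib.rept m j < v (t + 1) ∧ i = j + 1)) :
    (Calib.Ncount a i (t + 1) : ℝ) *
        max (Calib.defc m a v i (t + 1)) (Calib.exc m a v i (t + 1))
      ≤ max ((Calib.Ncount a i t : ℝ) *
          max (Calib.defc m a v i t) (Calib.exc m a v i t)) 1 := by
  have hm0 : (0:ℝ) < (m:ℝ) := by positivity
  have h1m : (0:ℝ) < 1 / (m:ℝ) := by positivity
  have hv0 : 0 ≤ v (t+1) := (hv (t+1)).1
  have hv1 : v (t+1) ≤ 1 := (hv (t+1)).2
  have hat : a (t + 1) = i := by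
    rcases hi with ⟨h1, h2⟩ | ⟨h1, h2⟩
    · rw [h2]; exact hplay0 h1
    · rw [h2]; exact hplay1 h1
  have hibound : 1 ≤ i ∧ i ≤ m := by
    rcases hi with ⟨_, h2⟩ | ⟨_, h2⟩ <;> omega
  have hsum : Calib.defc m a v i t + Calib.exc m a v i t = -(1/m) := by
    unfold Calib.defc Calib.exc Calib.lept Calib.rept
    field_simp
    ring
  have h2m : (0:ℝ) < 1 / (2*(m:ℝ)) := by positivity
  have hN : 0 < Calib.Ncount a i t := by
    by_contra h
    have hemp : Calib.emp m a v i t = Calib.Mg m i := by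
      unfold Calib.emp; rw [if_neg (by omega)]
    rcases hi with ⟨h1, h2⟩ | ⟨h1, h2⟩
    · subst h2
      have : Calib.exc m a v i t = -(1/(2*m)) := by
        unfold Calib.exc Calib.rept at *
        rw [hemp]; unfold Calib.Mg; field_simp; ring
      rw [this] at he; linarith
    · subst h2
      have : Calib.defc m a v (j+1) t = -(1/(2*m)) := by
        unfold Calib.defc Calib.lept at *
        rw [hemp]; unfold Calib.Mg; push_cast; field_simp; ring
      rw [this] at hd; linarith
  set N : ℝ := (Calib.Ncount a i t : ℝ) with hNdef
  have hNpos : (0:ℝ) < N := by rw [hNdef]; exact_mod_cast hN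
  set S : ℝ := (∑ s ∈ Finset.Icc 1 t, if a s = i then v s else 0) with hSdef
  have hempt : Calib.emp m a v i t = S / N := by
    unfold Calib.emp; rw [if_pos hN]
  have hNsucc : (Calib.Ncount a i (t+1) : ℝ) = N + 1 := by
    rw [Calib.Ncount_succ_eq a i t hat]; push_cast; ring
  have hempt1 : Calib.emp m a v i (t+1) = (S + v (t+1)) / (N + 1) := by
    unfold Calib.emp
    rw [if_pos (by rw [Calib.Ncount_succ_eq a i t hat]; omega),
      Calib.sum_succ_eq a v i t hat, Calib.Ncount_succ_eq a i t hat]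
    push_cast; ring_nf; rw [hNdef, hSdef]; ring
  have hN1 : (0:ℝ) < N + 1 := by linarith
  have hdt : N * Calib.defc m a v i t = N * Calib.lept m i - S := by
    unfold Calib.defc; rw [hempt]; field_simp; try ring
  have het : N * Calib.exc m a v i t = S - N * Calib.rept m i := by
    unfold Calib.exc; rw [hempt]; field_simp; try ring
  have hdt1 : (N+1) * Calib.defc m a v i (t+1)
      = (N+1) * Calib.lept m i - S - v (t+1) := by
    unfold Calib.defc; rw [hempt1]; field_simp; try ring
  have het1 : (N+1) * Calib.exc m a v i (t+1)
      = S + v (t+1) - (N+1) * Calib.rept m i := by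
    unfold Calib.exc; rw [hempt1]; field_simp; try ring
  rw [hNsucc, mul_max_of_nonneg _ _ (le_of_lt hN1)]
  have hl1 : Calib.lept m i ≤ 1 := by
    unfold Calib.lept
    rw [div_le_one hm0]
    have : (i:ℝ) ≤ m := by exact_mod_cast hibound.2
    linarith
  have hr1 : Calib.rept m i ≤ 1 := by
    unfold Calib.rept
    rw [div_le_one hm0]
    exact_mod_cast hibound.2
  have hr0 : 0 ≤ Calib.rept m i := by
    unfold Calib.rept; positivity
  apply max_le
  · rcases hi with ⟨h1, h2⟩ | ⟨h1, h2⟩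
    · subst h2
      have hd_neg : Calib.defc m a v i t ≤ 0 := by linarith
      have h3 : N * Calib.defc m a v i t ≤ 0 :=
        mul_nonpos_iff.mpr (Or.inl ⟨hNpos.le, hd_neg⟩)
      have : (N+1) * Calib.defc m a v i (t+1) ≤ 1 := by
        rw [hdt1]; rw [hdt] at h3; linarith
      exact le_trans this (le_max_right _ _)
    · subst h2
      have hlj : Calib.lept m (j+1) = Calib.rept m j := by
        unfold Calib.lept Calib.rept; push_cast; ring
      have hmax : max (Calib.defc m a v (j+1) t) (Calib.exc m a v (j+1) t)
          = Calib.defc m a v (j+1) t := by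
        apply max_eq_left; linarith
      rw [hmax]
      have : (N+1) * Calib.defc m a v (j+1) (t+1) ≤ N * Calib.defc m a v (j+1) t := by
        rw [hdt1, hdt, hlj]; linarith
      exact le_trans this (le_max_left _ _)
  · rcases hi with ⟨h1, h2⟩ | ⟨h1, h2⟩
    · subst h2
      have hmax : max (Calib.defc m a v i t) (Calib.exc m a v i t)
          = Calib.exc m a v i t := by
        apply max_eq_right; linarith
      rw [hmax]
      have : (N+1) * Calib.exc m a v i (t+1) ≤ N * Calib.exc m a v i t := by
        rw [het1, het]; linarith
      exact le_trans this (le_max_left _ _)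
    · subst h2
      have he_neg : Calib.exc m a v (j+1) t ≤ 0 := by linarith
      have h3 : N * Calib.exc m a v (j+1) t ≤ 0 :=
        mul_nonpos_iff.mpr (Or.inl ⟨hNpos.le, he_neg⟩)
      have : (N+1) * Calib.exc m a v (j+1) (t+1) ≤ 1 := by
        rw [het1]; rw [het] at h3; linarith
      exact le_trans this (le_max_right _ _)
end
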